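/- For the cycle C_n, the Mycielski graph satisfies λ(M(C_3)) = 6, λ(M(C_4)) = 8, λ(M(C_5)) = 10, and λ(M(C_n)) = n + 1 for all n ≥ 6. -/

import Mathlib

open SimpleGraph

abbrev MycVert (V : Type) : Type := V ⊕ V ⊕ Unit

def mycAdj {V : Type} (G : SimpleGraph V) : MycVert V → MycVert V → Prop
  | Sum.inl a, Sum.inl b => G.Adj a b
  | Sum.inl a, Sum.inr (Sum.inl b) => G.Adj a b
  | Sum.inr (Sum.inl a), Sum.inl b => G.Adj a b
  | Sum.inr (Sum.inl _), Sum.inr (Sum.inr _) => True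
  | Sum.inr (Sum.inr _), Sum.inr (Sum.inl _) => True
  | _, _ => False

/-- The Mycielski graph of `G`: `Sum.inl v` are original vertices, `Sum.inr (Sum.inl v)`
their copies, and `Sum.inr (Sum.inr ())` is the root. -/
def mycielski {V : Type} (G : SimpleGraph V) : SimpleGraph (MycVert V) where
  Adj := mycAdj G
  symm := ⟨by
    rintro (a | a | a) (b | b | b) h <;>
      first | exact G.adj_symm h | trivial | exact h.elim⟩
  loopless := ⟨by
    rintro (a | a | a) h <;> first | exact G.irrefl h | exact h⟩

def IterMycVert (V : Type) : ℕ → Type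
  | 0 => V
  | t + 1 => MycVert (IterMycVert V t)

/-- The `t`-th iterated Mycielski graph. -/
def iterMycielski {V : Type} (G : SimpleGraph V) : (t : ℕ) → SimpleGraph (IterMycVert V t)
  | 0 => G
  | t + 1 => mycielski (iterMycielski G t)

instance iterMycVertFintype (V : Type) [Fintype V] : (t : ℕ) → Fintype (IterMycVert V t)
  | 0 => inferInstanceAs (Fintype V)
  | t + 1 => letI := iterMycVertFintype V t
             inferInstanceAs (Fintype (MycVert (IterMycVert V t)))

/-- `f` is an `L(2,1)`-labeling of `G`. -/
def IsL21Labeling {V : Type} (G : SimpleGraph V) (f : V → ℕ) : Prop :=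
  (∀ x y, G.Adj x y → 2 ≤ ((f x : ℤ) - (f y : ℤ)).natAbs) ∧
  (∀ x y, G.dist x y = 2 → f x ≠ f y)

/-- The `L(2,1)`-labeling number `λ(G)`: the least `k` such that `G` has an
`L(2,1)`-labeling with labels in `{0, …, k}`. -/
noncomputable def lambdaNumber {V : Type} (G : SimpleGraph V) : ℕ :=
  sInf {k | ∃ f : V → ℕ, IsL21Labeling G f ∧ ∀ v, f v ≤ k}

/-!
The copies `u_v` in `M(G)` are pairwise at distance two through the root, so their labels are
distinct and avoid the root's label `c` and one of `c ± 1`; hence `λ(M(G)) ≥ |V| + 1`. For `n ≤ 5` the graph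
`M(C_n)` has diameter two, so every labeling is injective and `λ(M(C_n)) ≥ 2n`.

For the upper bound when `n ≥ 9`, the root gets `0`, the copies get an injection `σ` into
`{2, …, n + 1}`, and each original vertex `v_i` reuses the label of the copy of its antipode.
Since `σ` is injective, the distance-two conditions reduce to the antipode lying at distance at
least three from `i`, and the adjacency conditions to `σ` separating positions at cycle distance
`1` and `⌊n/2⌋ ± 1`. Listing the even positions first and then the odd ones puts consecutive
labels two apart on the cycle, which is enough. For `n ≤ 8`, explicit labelings are checked by
`decide`.
-/

theorem SimpleGraph.dist_eq_two_iff {V : Type} {G : SimpleGraph V} {u v : V} :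
    G.dist u v = 2 ↔ u ≠ v ∧ ¬G.Adj u v ∧ (G.commonNeighbors u v).Nonempty := by
  rw [SimpleGraph.dist, ENat.toNat_eq_iff two_ne_zero, ← edist_eq_two_iff]
  rfl

instance {V : Type} (G : SimpleGraph V) [DecidableRel G.Adj] : DecidableRel (mycielski G).Adj
  | .inl a, .inl b | .inl a, .inr (.inl b) | .inr (.inl a), .inl b =>
    inferInstanceAs (Decidable (G.Adj a b))
  | .inr (.inl _), .inr (.inr _) | .inr (.inr _), .inr (.inl _) => .isTrue trivial
  | .inl _, .inr (.inr _) | .inr (.inl _), .inr (.inl _) | .inr (.inr _), .inl _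
  | .inr (.inr _), .inr (.inr _) => .isFalse id

section Labeling

variable {V : Type} {G : SimpleGraph V} {f : V → ℕ}

theorem isL21Labeling_iff :
    IsL21Labeling G f ↔ (∀ x y, G.Adj x y → 2 ≤ ((f x : ℤ) - (f y : ℤ)).natAbs) ∧
      ∀ x y w, x ≠ y → ¬G.Adj x y → G.Adj x w → G.Adj w y → f x ≠ f y := by
  refine and_congr_right fun _ => ⟨fun h x y w hne hxy hxw hwy => h x y ?_, fun h x y hd => ?_⟩
  · exact dist_eq_two_iff.2 ⟨hne, hxy, w, hxw, hwy.symm⟩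
  · obtain ⟨hne, hxy, w, hxw, hyw⟩ := dist_eq_two_iff.1 hd
    exact h x y w hne hxy hxw hyw.symm

theorem IsL21Labeling.ne_of_adj_of_adj (hf : IsL21Labeling G f) {x y w : V} (hne : x ≠ y)
    (hxw : G.Adj x w) (hwy : G.Adj w y) : f x ≠ f y := by
  by_cases hxy : G.Adj x y
  · have := hf.1 x y hxy
    omega
  · exact (isL21Labeling_iff.1 hf).2 x y w hne hxy hxw hwy

theorem lambdaNumber_eq {m : ℕ} (hub : ∃ f, IsL21Labeling G f ∧ ∀ v, f v ≤ m)
    (hlb : ∀ f, IsL21Labeling G f → ∃ v, m ≤ f v) : lambdaNumber G = m :=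
  le_antisymm (Nat.sInf_le hub) <| le_csInf ⟨m, hub⟩ fun _ ⟨f, hf, hk⟩ =>
    let ⟨v, hv⟩ := hlb f hf
    hv.trans (hk v)

theorem IsL21Labeling.exists_card_sub_one_le [Fintype V] [Nonempty V] (hf : IsL21Labeling G f)
    (hG : ∀ x y, x ≠ y → G.Adj x y ∨ ∃ w, G.Adj x w ∧ G.Adj w y) :
    ∃ v, Fintype.card V - 1 ≤ f v := by
  have hinj : Function.Injective f := by
    intro x y hfxy
    by_contra hne
    rcases hG x y hne with hxy | ⟨w, hxw, hwy⟩
    · have := hf.1 x y hxy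
      omega
    · exact hf.ne_of_adj_of_adj hne hxw hwy hfxy
  by_contra! hlt
  have := Fintype.card_le_of_injective (fun v => (⟨f v, hlt v⟩ : Fin (Fintype.card V - 1)))
    fun x y hxy => hinj (Fin.mk.inj hxy)
  simp only [Fintype.card_fin] at this
  have := Fintype.card_pos (α := V)
  omega

end Labeling

theorem exists_card_add_one_le_of_isL21Labeling_mycielski {V : Type} [Fintype V] [Nonempty V]
    {G : SimpleGraph V} {f : MycVert V → ℕ} (hf : IsL21Labeling (mycielski G) f) :
    ∃ x, Fintype.card V + 1 ≤ f x := by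
  by_contra! hlt
  set c := f (.inr (.inr ()))
  have hgap (v : V) : 2 ≤ ((f (.inr (.inl v)) : ℤ) - c).natAbs := hf.1 _ _ trivial
  have hinj : Function.Injective fun v => f (.inr (.inl v)) := fun v w hvw => by
    by_contra hne
    exact hf.ne_of_adj_of_adj (x := .inr (.inl v)) (y := .inr (.inl w)) (w := .inr (.inr ()))
      (by simpa using hne) trivial trivial hvw
  -- closing the gap `c - 1, c, c + 1` leaves at most `card V - 1` values for the copies
  let squeeze (v : V) : Fin (Fintype.card V - 1) :=
    ⟨if f (.inr (.inl v)) < c then f (.inr (.inl v)) else f (.inr (.inl v)) - 2, by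
      have := hgap v; have := hlt (.inr (.inl v)); have := hlt (.inr (.inr ())); split_ifs <;> omega⟩
  have := Fintype.card_le_of_injective squeeze fun v w hvw => hinj (by
    show f _ = f _
    have := hgap v; have := hgap w
    simp only [squeeze, Fin.mk.injEq] at hvw
    split_ifs at hvw <;> omega)
  simp only [Fintype.card_fin] at this
  have := Fintype.card_pos (α := V)
  omega

def mycielskiLabeling {V : Type} (a b : V → ℕ) (r : ℕ) : MycVert V → ℕ
  | .inl v => a v
  | .inr (.inl v) => b v
  | .inr (.inr _) => r

section Shift

variable {V : Type} {G : SimpleGraph V} {σ : V → ℕ} {φ : V → V}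

theorem isL21Labeling_mycielskiLabeling_comp (hσ : Function.Injective σ)
    (hφ : Function.Injective φ) (hσ2 : ∀ v, 2 ≤ σ v)
    (hadj : ∀ v w, G.Adj v w → 2 ≤ ((σ (φ v) : ℤ) - σ (φ w)).natAbs)
    (hcopy : ∀ v w, G.Adj v w → 2 ≤ ((σ (φ v) : ℤ) - σ w).natAbs)
    (hfar : ∀ v w k, G.Adj v k → G.Adj k w → φ v ≠ w) :
    IsL21Labeling (mycielski G) (mycielskiLabeling (σ ∘ φ) σ 0) := by
  refine isL21Labeling_iff.2 ⟨?_, ?_⟩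
  · rintro (v | v | ⟨⟩) (w | w | ⟨⟩) h <;>
      simp only [mycielskiLabeling, Function.comp_apply, Nat.cast_zero]
    · exact hadj v w h
    · exact hcopy v w h
    · exact h.elim
    · have := hcopy w v (G.adj_symm h)
      omega
    · exact h.elim
    · have := hσ2 v
      omega
    · exact h.elim
    · have := hσ2 w
      omega
    · exact h.elim
  · rintro (v | v | ⟨⟩) (w | w | ⟨⟩) x hne hxy hvx hxw <;>
      simp only [mycielskiLabeling, Function.comp_apply, ne_eq]
    · exact hσ.ne (hφ.ne fun h => hne (h ▸ rfl))
    · rcases x with k | k | ⟨⟩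
      · exact hσ.ne (hfar v w k hvx hxw)
      · exact hxw.elim
      · exact hvx.elim
    · have := hσ2 (φ v)
      omega
    · rcases x with k | k | ⟨⟩
      · exact hσ.ne (hfar w v k (G.adj_symm hxw) (G.adj_symm hvx)).symm
      · exact hvx.elim
      · exact hxw.elim
    · exact hσ.ne fun h => hne (h ▸ rfl)
    · have := hσ2 v
      omega
    · have := hσ2 (φ w)
      omega
    · have := hσ2 w
      omega
    · exact (hne rfl).elim

end Shift

theorem Nat.mod_eq_or_mod_add_eq_of_lt_two_mul {m n : ℕ} (h : m < 2 * n) :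
    m % n = m ∨ m % n + n = m := by
  rcases Nat.lt_or_ge m n with hmn | hmn
  · exact Or.inl (Nat.mod_eq_of_lt hmn)
  · rw [Nat.mod_eq_sub_mod hmn, Nat.mod_eq_of_lt (by omega)]
    omega

section Cycle

variable {n : ℕ}

theorem val_of_cycleGraph_adj {i j : Fin n} (h : (cycleGraph n).Adj i j) :
    (i : ℕ) = j + 1 ∨ (j : ℕ) = i + 1 ∨ ((i : ℕ) = 0 ∧ (j : ℕ) = n - 1) ∨
      ((j : ℕ) = 0 ∧ (i : ℕ) = n - 1) := by
  have hsub (a b : Fin n) (hab : (a - b : Fin n).val = 1) :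
      (a : ℕ) = b + 1 ∨ ((a : ℕ) = 0 ∧ (b : ℕ) = n - 1) := by
    rw [Fin.val_sub] at hab
    rcases Nat.mod_eq_or_mod_add_eq_of_lt_two_mul (m := n - b + a) (n := n) (by omega) with h | h
    <;> omega
  rcases cycleGraph_adj'.1 h with h | h
  · have := hsub i j h
    omega
  · have := hsub j i h
    omega

def antipode (i : Fin n) : Fin n :=
  ⟨(i + n / 2) % n, Nat.mod_lt _ i.pos⟩

theorem antipode_val (i : Fin n) :
    (antipode i : ℕ) = i + n / 2 ∨ (antipode i : ℕ) + n = i + n / 2 :=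
  Nat.mod_eq_or_mod_add_eq_of_lt_two_mul (by omega)

theorem antipode_injective : Function.Injective (antipode : Fin n → Fin n) := by
  intro i j h
  have := antipode_val i
  have := antipode_val j
  rw [Fin.ext_iff] at h ⊢
  omega

theorem antipode_ne_of_adj_of_adj (hn : 6 ≤ n) {i j k : Fin n} (hik : (cycleGraph n).Adj i k)
    (hkj : (cycleGraph n).Adj k j) : antipode i ≠ j := by
  have := val_of_cycleGraph_adj hik
  have := val_of_cycleGraph_adj hkj
  have := antipode_val i
  rw [Ne, Fin.ext_iff]
  omega

def interleavedLabel (n j : ℕ) : ℕ :=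
  if j % 2 = 0 then 2 + j / 2 else 2 + (n + 1) / 2 + j / 2

theorem two_le_interleavedLabel (j : ℕ) : 2 ≤ interleavedLabel n j := by
  unfold interleavedLabel
  split_ifs <;> omega

theorem interleavedLabel_le {j : ℕ} (hj : j < n) : interleavedLabel n j ≤ n + 1 := by
  unfold interleavedLabel
  split_ifs <;> omega

theorem interleavedLabel_injective : Function.Injective fun j : Fin n => interleavedLabel n j := by
  intro i j h
  have := i.isLt
  have := j.isLt
  simp only [interleavedLabel, Fin.ext_iff] at h ⊢
  split_ifs at h <;> omega

theorem two_le_natAbs_interleavedLabel_antipode_sub_antipode (hn : 9 ≤ n) {i j : Fin n}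
    (h : (cycleGraph n).Adj i j) :
    2 ≤ ((interleavedLabel n (antipode i) : ℤ) - interleavedLabel n (antipode j)).natAbs := by
  have := val_of_cycleGraph_adj h
  have := antipode_val i
  have := antipode_val j
  have := (antipode i).isLt
  have := (antipode j).isLt
  unfold interleavedLabel
  split_ifs <;> omega

theorem two_le_natAbs_interleavedLabel_antipode_sub (hn : 9 ≤ n) {i j : Fin n}
    (h : (cycleGraph n).Adj i j) :
    2 ≤ ((interleavedLabel n (antipode i) : ℤ) - interleavedLabel n j).natAbs := by
  have := val_of_cycleGraph_adj h
  have := antipode_val i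
  have := (antipode i).isLt
  unfold interleavedLabel
  split_ifs <;> omega

end Cycle

theorem exists_isL21Labeling_mycielski_cycleGraph_le {n : ℕ} (hn : 9 ≤ n) :
    ∃ f, IsL21Labeling (mycielski (cycleGraph n)) f ∧ ∀ x, f x ≤ n + 1 := by
  let σ : Fin n → ℕ := fun j => interleavedLabel n j
  refine ⟨mycielskiLabeling (σ ∘ antipode) σ 0,
    isL21Labeling_mycielskiLabeling_comp interleavedLabel_injective antipode_injective
      (fun _ => two_le_interleavedLabel _)
      (fun _ _ => two_le_natAbs_interleavedLabel_antipode_sub_antipode hn)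
      (fun _ _ => two_le_natAbs_interleavedLabel_antipode_sub hn)
      (fun _ _ _ => antipode_ne_of_adj_of_adj (by omega)), ?_⟩
  rintro (i | i | ⟨⟩)
  · exact interleavedLabel_le (antipode i).isLt
  · exact interleavedLabel_le i.isLt
  · exact Nat.zero_le _

/-- `λ(M(C_3)) = 6`, `λ(M(C_4)) = 8`, `λ(M(C_5)) = 10`, and `λ(M(C_n)) = n + 1` for `n ≥ 6`. -/
theorem lambdaNumber_mycielski_cycleGraph :
    lambdaNumber (mycielski (SimpleGraph.cycleGraph 3)) = 6 ∧
    lambdaNumber (mycielski (SimpleGraph.cycleGraph 4)) = 8 ∧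
    lambdaNumber (mycielski (SimpleGraph.cycleGraph 5)) = 10 ∧
    ∀ n : ℕ, 6 ≤ n → lambdaNumber (mycielski (SimpleGraph.cycleGraph n)) = n + 1 := by
  refine ⟨?_, ?_, ?_, fun n hn => ?_⟩
  · refine lambdaNumber_eq ⟨mycielskiLabeling ![0, 2, 6] ![4, 3, 5] 1,
      isL21Labeling_iff.2 (by decide), by decide⟩ fun f hf => ?_
    simpa using hf.exists_card_sub_one_le (by decide)
  · refine lambdaNumber_eq ⟨mycielskiLabeling ![0, 2, 5, 8] ![4, 3, 6, 7] 1,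
      isL21Labeling_iff.2 (by decide), by decide⟩ fun f hf => ?_
    simpa using hf.exists_card_sub_one_le (by decide)
  · refine lambdaNumber_eq ⟨mycielskiLabeling ![0, 2, 4, 1, 5] ![7, 6, 8, 9, 10] 3,
      isL21Labeling_iff.2 (by decide), by decide⟩ fun f hf => ?_
    simpa using hf.exists_card_sub_one_le (by decide)
  have : NeZero n := ⟨by omega⟩
  refine lambdaNumber_eq ?_ fun f hf => by
    simpa using exists_card_add_one_le_of_isL21Labeling_mycielski hf
  obtain rfl | rfl | rfl | hn := (by omega : n = 6 ∨ n = 7 ∨ n = 8 ∨ 9 ≤ n)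
  · exact ⟨mycielskiLabeling ![0, 3, 6, 1, 4, 6] ![1, 4, 5, 0, 3, 2] 7,
      isL21Labeling_iff.2 (by decide), by decide⟩
  · exact ⟨mycielskiLabeling ![0, 3, 5, 1, 7, 2, 6] ![1, 2, 6, 0, 4, 3, 5] 8,
      isL21Labeling_iff.2 (by decide), by decide⟩
  · exact ⟨mycielskiLabeling ![1, 6, 8, 2, 9, 1, 3, 5] ![2, 3, 4, 5, 6, 7, 8, 9] 0,
      isL21Labeling_iff.2 (by decide), by decide⟩
  · exact exists_isL21Labeling_mycielski_cycleGraph_le hn
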